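/- Let θ₀ ∈ [0,2π), τ₀ > 0 and n ≥ 1 be the parameters of a discrete helical lattice H₀ with reciprocal lattice H₀', and let U = {(s·(2π/n) + t·θ₀, t·τ₀) : s, t ∈ [0,1)} ⊂ ℝ² be the corresponding unit cell in the (φ, z)-variables. Fix r > 0 and let ψ : [0,2π) × ℝ → ℂ be continuous with Σ_{(θ,τ) ∈ H₀} ∫₀^{2π} ∫_ℝ |ψ((φ − θ) mod 2π, z − τ)| dz dφ < ∞, and define ρ(φ, z) = Σ_{(θ,τ) ∈ H₀} ψ((φ − θ) mod 2π, z − τ) for (φ, z) ∈ [0,2π) × ℝ, extended 2π-periodically in φ to all of ℝ × ℝ. Then for every (α, β) ∈ H₀': ∫₀^{2π} ∫_ℝ ψ(φ, z) e^{−i(αφ + βz)} dz dφ = ∫∫_U ρ(φ, z) e^{−i(αφ + βz)} dz dφ. In particular the left-hand side does not depend on the choice of ψ representing ρ. -/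

import Mathlib

noncomputable section

open Real

/-- Reduction of a real number modulo 2π into [0, 2π). -/
def mod2pi (x : ℝ) : ℝ := x - 2*Real.pi * ⌊x / (2*Real.pi)⌋

/-- The discrete helical lattice with parameters θ₀, τ₀, n:
`H₀ = {((2πi/n + θ₀ j) mod 2π, τ₀ j) : i ∈ {0,…,n−1}, j ∈ ℤ} ⊂ [0,2π) × ℝ`. -/
def helLat (θ₀ τ₀ : ℝ) (n : ℕ) : Set (ℝ × ℝ) :=
  {p | ∃ i j : ℤ, 0 ≤ i ∧ i < (n : ℤ) ∧
    p = (mod2pi (2*Real.pi*i/n + θ₀*j), τ₀*j)}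

/-- The reciprocal helical lattice:
`H₀' = {(α,β) ∈ ℤ × ℝ : αθ + βτ ∈ 2πℤ for all (θ,τ) ∈ H₀}`. -/
def helRec (θ₀ τ₀ : ℝ) (n : ℕ) : Set (ℤ × ℝ) :=
  {q | ∀ p ∈ helLat θ₀ τ₀ n, ∃ m : ℤ, (q.1 : ℝ) * p.1 + q.2 * p.2 = 2*Real.pi*m}

open MeasureTheory

/-- The unit cell of the helical lattice in the (φ, z)-variables. -/
def Ucell (θ₀ τ₀ : ℝ) (n : ℕ) : Set (ℝ × ℝ) :=
  {p | ∃ s t : ℝ, s ∈ Set.Ico (0:ℝ) 1 ∧ t ∈ Set.Ico (0:ℝ) 1 ∧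
    p = (s * (2*Real.pi/n) + t * θ₀, t * τ₀)}

/-
Put `F(x) = ψ(x₁ mod 2π, x₂)` and `G = F · e_q` with `e_q(x) = e^{-i⟨q, x⟩}`. Both factors are
`2π`-periodic in `x₁`, and because `q ∈ H₀'` the character `e_q` is also invariant under the
vectors `v_{i,j} = (2πi/n + θ₀ j, τ₀ j)` that reduce mod `2π` to the points of `H₀`. Hence
`ρ e_q = Σ_{i,j} G(· - v_{i,j})`, and integrating over `U` amounts to integrating `G` over the
union of the translates `U - v_{i,j}` (`0 ≤ i < n`, `j ∈ ℤ`). These translates tile the slanted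
strip `{x : x₁ - (θ₀/τ₀) x₂ ∈ [2π/n - 2π, 2π/n)}`, which, like `[0, 2π) × ℝ`, is a fundamental
domain for the translations by `2πℤ × {0}`; so the integral of the periodic `G` over it is its
integral over `[0, 2π) × ℝ`, the left-hand side.
-/

open Set Function

lemma mod2pi_eq_toIcoMod (x : ℝ) : mod2pi x = toIcoMod two_pi_pos 0 x := by
  rw [toIcoMod_eq_fract_mul, Int.fract, mod2pi]
  field_simp

lemma mod2pi_periodic : Periodic mod2pi (2 * π) := by
  simpa only [← funext mod2pi_eq_toIcoMod] using toIcoMod_periodic two_pi_pos 0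

lemma mod2pi_eq_self {x : ℝ} (hx : x ∈ Ico 0 (2 * π)) : mod2pi x = x := by
  rwa [mod2pi_eq_toIcoMod, toIcoMod_eq_self, zero_add]

lemma mod2pi_eq_mod2pi {x y : ℝ} : mod2pi x = mod2pi y ↔ ∃ k : ℤ, y - x = k • (2 * π) := by
  simp only [mod2pi_eq_toIcoMod, toIcoMod_eq_toIcoMod]

lemma exists_mod2pi_sub_eq (x : ℝ) : ∃ k : ℤ, mod2pi x - x = k • (2 * π) := by
  rw [mod2pi_eq_toIcoMod, toIcoMod_sub_self]
  exact ⟨_, rfl⟩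

lemma mod2pi_zero : mod2pi 0 = 0 := mod2pi_eq_self ⟨le_rfl, two_pi_pos⟩

def planeWave (q : ℤ × ℝ) (x : ℝ × ℝ) : ℂ :=
  Complex.exp (-Complex.I * (((q.1 : ℝ) * x.1 + q.2 * x.2 : ℝ) : ℂ))

lemma continuous_planeWave (q : ℤ × ℝ) : Continuous (planeWave q) := by
  unfold planeWave; fun_prop

lemma norm_planeWave (q : ℤ × ℝ) (x : ℝ × ℝ) : ‖planeWave q x‖ = 1 := by
  rw [planeWave, neg_mul, ← mul_neg, mul_comm, ← Complex.ofReal_neg]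
  exact Complex.norm_exp_ofReal_mul_I _

lemma enorm_planeWave (q : ℤ × ℝ) (x : ℝ × ℝ) : ‖planeWave q x‖ₑ = 1 := by
  rw [← ofReal_norm, norm_planeWave, ENNReal.ofReal_one]

lemma planeWave_add_of_pairing_eq {q : ℤ × ℝ} {v : ℝ × ℝ} {m : ℤ}
    (hv : (q.1 : ℝ) * v.1 + q.2 * v.2 = 2 * π * m) (x : ℝ × ℝ) :
    planeWave q (x + v) = planeWave q x := by
  have hsum : (q.1 : ℝ) * (x + v).1 + q.2 * (x + v).2 = (q.1 * x.1 + q.2 * x.2) + 2 * π * m := by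
    simp only [Prod.fst_add, Prod.snd_add]
    linarith
  have hper : -Complex.I * ((2 * π * m : ℝ) : ℂ) = ((-m : ℤ) : ℂ) * (2 * π * Complex.I) := by
    push_cast
    ring
  rw [planeWave, planeWave, hsum, Complex.ofReal_add, mul_add, Complex.exp_add, hper,
    Complex.exp_int_mul_two_pi_mul_I, mul_one]

lemma planeWave_periodic (q : ℤ × ℝ) : Periodic (planeWave q) (2 * π, 0) :=
  planeWave_add_of_pairing_eq (m := q.1) (by simp only [mul_zero, add_zero]; ring)

lemma integrableOn_prod_of_lintegral_lt_top {E : Type*} [NormedAddCommGroup E] {F : ℝ × ℝ → E}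
    {s t : Set ℝ} (hs : MeasurableSet s) (ht : MeasurableSet t) (hF : ContinuousOn F (s ×ˢ t))
    (hfin : ∫⁻ φ in s, ∫⁻ z in t, ‖F (φ, z)‖ₑ < ⊤) : IntegrableOn F (s ×ˢ t) := by
  have hmeas := hF.aestronglyMeasurable (μ := volume) (hs.prod ht)
  refine ⟨hmeas, ?_⟩
  rw [hasFiniteIntegral_iff_enorm]
  rw [Measure.volume_eq_prod] at hmeas ⊢
  rwa [setLIntegral_prod _ hmeas.enorm]

lemma intervalIntegral_integral_eq_setIntegral_Ico_prod_univ {E : Type*} [NormedAddCommGroup E]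
    [NormedSpace ℝ E] {T : ℝ} (hT : 0 ≤ T) {f g : ℝ × ℝ → E} (hfg : EqOn f g (Ico 0 T ×ˢ univ))
    (hg : IntegrableOn g (Ico 0 T ×ˢ univ)) :
    ∫ φ in 0..T, ∫ z, f (φ, z) = ∫ x in Ico 0 T ×ˢ univ, g x := by
  rw [intervalIntegral.integral_of_le hT, integral_Ioc_eq_integral_Ioo,
    ← integral_Ico_eq_integral_Ioo, Measure.volume_eq_prod,
    setIntegral_prod g (by rwa [← Measure.volume_eq_prod]), Measure.restrict_univ]
  exact setIntegral_congr_fun measurableSet_Ico fun φ hφ =>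
    integral_congr_ae (.of_forall fun z => hfg ⟨hφ, trivial⟩)

def slantedStrip (a t T : ℝ) : Set (ℝ × ℝ) := {x | x.1 - a * x.2 ∈ Ico t (t + T)}

lemma measurableSet_slantedStrip (a t T : ℝ) : MeasurableSet (slantedStrip a t T) :=
  measurableSet_Ico.preimage (by fun_prop)

lemma slantedStrip_zero (t T : ℝ) : slantedStrip 0 t T = Ico t (t + T) ×ˢ univ := by
  ext x; simp [slantedStrip]

lemma isAddFundamentalDomain_slantedStrip {T : ℝ} (hT : 0 < T) (a t : ℝ) :
    IsAddFundamentalDomain (AddSubgroup.zmultiples ((T, 0) : ℝ × ℝ)) (slantedStrip a t T) := by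
  refine .mk' (measurableSet_slantedStrip a t T).nullMeasurableSet fun x => ?_
  have hinj : Injective fun m : ℤ => m • ((T, 0) : ℝ × ℝ) := fun m m' h => by
    simpa using (zsmul_left_strictMono hT).injective (congrArg Prod.fst h)
  refine ((Equiv.ofInjective _ hinj).bijective.existsUnique_iff).2 ?_
  refine (existsUnique_congr fun m => ?_).1 (existsUnique_add_zsmul_mem_Ico hT (x.1 - a * x.2) t)
  change _ ↔ (m • ((T, 0) : ℝ × ℝ) + x).1 - a * (m • ((T, 0) : ℝ × ℝ) + x).2 ∈ Ico t (t + T)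
  simp [add_sub_right_comm, add_comm]

def helVec (θ₀ τ₀ : ℝ) (n : ℕ) (p : Fin n × ℤ) : ℝ × ℝ :=
  (2 * π * (p.1 : ℕ) / n + θ₀ * p.2, τ₀ * p.2)

def toHelLat (θ₀ τ₀ : ℝ) (n : ℕ) (p : Fin n × ℤ) : helLat θ₀ τ₀ n :=
  ⟨(mod2pi (helVec θ₀ τ₀ n p).1, (helVec θ₀ τ₀ n p).2),
    p.1, p.2, by positivity, by simp, by simp [helVec]⟩

lemma toHelLat_bijective {θ₀ τ₀ : ℝ} (hτ₀ : τ₀ ≠ 0) (n : ℕ) :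
    Bijective (toHelLat θ₀ τ₀ n) := by
  refine ⟨fun ⟨i, j⟩ ⟨i', j'⟩ h => ?_, ?_⟩
  · simp only [toHelLat, helVec, Subtype.mk.injEq, Prod.mk.injEq] at h
    obtain ⟨h₁, h₂⟩ := h
    obtain rfl : j = j' := by exact_mod_cast mul_left_cancel₀ hτ₀ h₂
    obtain ⟨k, hk⟩ := mod2pi_eq_mod2pi.1 h₁
    have hn : (n : ℝ) ≠ 0 := by have := i.pos; positivity
    have hdiff : ((i' : ℕ) - (i : ℕ) : ℤ) = n * k := by
      rw [zsmul_eq_mul] at hk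
      field_simp at hk
      have h2π : 2 * π * ((i' : ℕ) - (i : ℕ) : ℝ) = 2 * π * (n * k) := by linear_combination hk
      exact_mod_cast mul_left_cancel₀ two_pi_pos.ne' h2π
    have : ((i' : ℕ) - (i : ℕ) : ℤ) = 0 :=
      Int.eq_zero_of_abs_lt_dvd ⟨k, hdiff⟩ (by rw [abs_lt]; omega)
    simp only [Prod.mk.injEq, and_true]
    exact Fin.ext (by omega)
  · rintro ⟨_, i, j, hi₀, hin, rfl⟩
    lift i to ℕ using hi₀
    exact ⟨(⟨i, by omega⟩, j), rfl⟩

lemma tsum_helLat_sub_eq_tsum_helVec {M : Type*} [AddCommMonoid M] [TopologicalSpace M]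
    {θ₀ τ₀ : ℝ} (hτ₀ : τ₀ ≠ 0) (n : ℕ) {F : ℝ × ℝ → M} (hF : Periodic F (2 * π, 0))
    (x : ℝ × ℝ) :
    ∑' P : helLat θ₀ τ₀ n, F (x - P) = ∑' p, F (x - helVec θ₀ τ₀ n p) := by
  rw [← (Equiv.ofBijective _ (toHelLat_bijective hτ₀ n)).tsum_eq]
  refine tsum_congr fun p => ?_
  obtain ⟨k, hk⟩ := exists_mod2pi_sub_eq (helVec θ₀ τ₀ n p).1
  have : x - (toHelLat θ₀ τ₀ n p : ℝ × ℝ) = x - helVec θ₀ τ₀ n p + (-k) • (2 * π, 0) := by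
    ext
    · simp [toHelLat, ← hk]
    · simp [toHelLat]
  rw [Equiv.ofBijective_apply, this, (hF.zsmul (-k)) _]

lemma planeWave_sub_helVec {θ₀ τ₀ : ℝ} {n : ℕ} {q : ℤ × ℝ} (hq : q ∈ helRec θ₀ τ₀ n)
    (x : ℝ × ℝ) (p : Fin n × ℤ) : planeWave q (x - helVec θ₀ τ₀ n p) = planeWave q x := by
  obtain ⟨m, hm⟩ := hq _ (toHelLat θ₀ τ₀ n p).2
  obtain ⟨k, hk⟩ := exists_mod2pi_sub_eq (helVec θ₀ τ₀ n p).1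
  simp only [toHelLat, zsmul_eq_mul] at hm hk
  rw [sub_eq_add_neg]
  refine planeWave_add_of_pairing_eq (m := q.1 * k - m) ?_ x
  simp only [Prod.fst_neg, Prod.snd_neg]
  push_cast
  linear_combination -hm + (q.1 : ℝ) * hk

lemma add_intCast_mem_Ico_zero_one_iff (y : ℝ) (k : ℤ) : y + k ∈ Ico (0 : ℝ) 1 ↔ ⌊y⌋ = -k := by
  rw [Int.floor_eq_iff, mem_Ico]
  push_cast
  constructor <;> rintro ⟨h₁, h₂⟩ <;> constructor <;> linarith

/-- Coordinates with respect to the basis `(2π/n, 0)`, `(θ₀, τ₀)` that spans `Ucell`. -/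
def helCoord (θ₀ τ₀ : ℝ) (n : ℕ) (x : ℝ × ℝ) : ℝ × ℝ :=
  ((x.1 - θ₀ * (x.2 / τ₀)) / (2 * π / n), x.2 / τ₀)

section Tiling

variable {θ₀ τ₀ : ℝ} {n : ℕ}

lemma mem_Ucell_iff (hτ₀ : τ₀ ≠ 0) (hn : n ≠ 0) (x : ℝ × ℝ) :
    x ∈ Ucell θ₀ τ₀ n ↔ helCoord θ₀ τ₀ n x ∈ Ico 0 1 ×ˢ Ico 0 1 := by
  have hc : 2 * π / n ≠ 0 := by positivity
  constructor
  · rintro ⟨s, t, hs, ht, rfl⟩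
    have ht' : t * τ₀ / τ₀ = t := by field_simp
    have hs' : (s * (2 * π / n) + t * θ₀ - θ₀ * t) / (2 * π / n) = s := by field_simp; ring
    simpa [helCoord, ht', hs'] using ⟨hs, ht⟩
  · rintro ⟨hs, ht⟩
    refine ⟨_, _, hs, ht, ?_⟩
    ext <;> simp only [helCoord]
    · field_simp
      ring
    · field_simp

lemma measurableSet_Ucell (hτ₀ : τ₀ ≠ 0) (hn : n ≠ 0) : MeasurableSet (Ucell θ₀ τ₀ n) := by
  rw [show Ucell θ₀ τ₀ n = helCoord θ₀ τ₀ n ⁻¹' (Ico 0 1 ×ˢ Ico 0 1) from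
    ext (mem_Ucell_iff hτ₀ hn)]
  exact (measurableSet_Ico.prod measurableSet_Ico).preimage (by unfold helCoord; fun_prop)

lemma helCoord_add_helVec (hτ₀ : τ₀ ≠ 0) (hn : n ≠ 0) (x : ℝ × ℝ) (p : Fin n × ℤ) :
    helCoord θ₀ τ₀ n (x + helVec θ₀ τ₀ n p) =
      helCoord θ₀ τ₀ n x + (((p.1 : ℕ) : ℝ), (p.2 : ℝ)) := by
  ext
  · simp only [helCoord, helVec, Prod.fst_add, Prod.snd_add]
    field_simp
    ring
  · simp only [helCoord, helVec, Prod.fst_add, Prod.snd_add]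
    field_simp

lemma add_helVec_mem_Ucell_iff (hτ₀ : τ₀ ≠ 0) (hn : n ≠ 0) (x : ℝ × ℝ) (p : Fin n × ℤ) :
    x + helVec θ₀ τ₀ n p ∈ Ucell θ₀ τ₀ n ↔
      ⌊(helCoord θ₀ τ₀ n x).1⌋ = -((p.1 : ℕ) : ℤ) ∧ ⌊(helCoord θ₀ τ₀ n x).2⌋ = -p.2 := by
  rw [mem_Ucell_iff hτ₀ hn, helCoord_add_helVec hτ₀ hn, mem_prod, Prod.fst_add, Prod.snd_add,
    ← add_intCast_mem_Ico_zero_one_iff, ← add_intCast_mem_Ico_zero_one_iff, Int.cast_natCast]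

lemma pairwise_disjoint_preimage_add_helVec_Ucell (hτ₀ : τ₀ ≠ 0) (hn : n ≠ 0) :
    Pairwise (Disjoint on fun p => (· + helVec θ₀ τ₀ n p) ⁻¹' Ucell θ₀ τ₀ n) := by
  rintro ⟨i, j⟩ ⟨i', j'⟩ hne
  refine disjoint_left.2 fun x hx hx' => hne ?_
  rw [mem_preimage, add_helVec_mem_Ucell_iff hτ₀ hn] at hx hx'
  refine Prod.ext (Fin.ext ?_) ?_ <;> simp only at hx hx' ⊢ <;> omega

lemma iUnion_preimage_add_helVec_Ucell (hτ₀ : τ₀ ≠ 0) (hn : n ≠ 0) :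
    ⋃ p, (· + helVec θ₀ τ₀ n p) ⁻¹' Ucell θ₀ τ₀ n =
      slantedStrip (θ₀ / τ₀) (2 * π / n - 2 * π) (2 * π) := by
  have hc : 0 < 2 * π / n := by positivity
  ext x
  have hstrip : x ∈ slantedStrip (θ₀ / τ₀) (2 * π / n - 2 * π) (2 * π) ↔
      1 - (n : ℤ) ≤ ⌊(helCoord θ₀ τ₀ n x).1⌋ ∧ ⌊(helCoord θ₀ τ₀ n x).1⌋ < 1 := by
    have hσ : x.1 - θ₀ / τ₀ * x.2 = (helCoord θ₀ τ₀ n x).1 * (2 * π / n) := by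
      simp only [helCoord]
      field_simp
    have hT : 2 * π / n - 2 * π = ((1 - n : ℤ) : ℝ) * (2 * π / n) := by
      push_cast
      field_simp
    rw [Int.le_floor, Int.floor_lt, ← mul_le_mul_iff_of_pos_right hc,
      ← mul_lt_mul_iff_of_pos_right hc]
    simp only [slantedStrip, mem_ofPred_eq, mem_Ico, hσ, ← hT, sub_add_cancel, Int.cast_one,
      one_mul]
  simp only [mem_iUnion, mem_preimage, add_helVec_mem_Ucell_iff hτ₀ hn, hstrip]
  constructor
  · rintro ⟨⟨i, j⟩, hi, -⟩
    omega
  · rintro ⟨h₁, h₂⟩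
    exact ⟨(⟨(-⌊(helCoord θ₀ τ₀ n x).1⌋).toNat, by omega⟩, -⌊(helCoord θ₀ τ₀ n x).2⌋),
      by simp only [Int.ofNat_toNat]; omega, by simp⟩

end Tiling

section Unfolding

variable {E : Type*} [NormedAddCommGroup E] {θ₀ τ₀ : ℝ} {n : ℕ}

lemma setLIntegral_slantedStrip_eq_tsum (hτ₀ : τ₀ ≠ 0) (hn : n ≠ 0) (f : ℝ × ℝ → ENNReal) :
    ∫⁻ x in slantedStrip (θ₀ / τ₀) (2 * π / n - 2 * π) (2 * π), f x =
      ∑' p, ∫⁻ x in Ucell θ₀ τ₀ n, f (x - helVec θ₀ τ₀ n p) := by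
  rw [← iUnion_preimage_add_helVec_Ucell hτ₀ hn, lintegral_iUnion
    (fun p => (measurableSet_Ucell hτ₀ hn).preimage (measurable_add_const _))
    (pairwise_disjoint_preimage_add_helVec_Ucell hτ₀ hn)]
  refine tsum_congr fun p => ?_
  simpa using (measurePreserving_add_right volume (helVec θ₀ τ₀ n p)).setLIntegral_comp_preimage_emb
    (measurableEmbedding_addRight _) (fun x => f (x - helVec θ₀ τ₀ n p)) (Ucell θ₀ τ₀ n)

lemma setIntegral_slantedStrip_eq_tsum [NormedSpace ℝ E] (hτ₀ : τ₀ ≠ 0) (hn : n ≠ 0)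
    {f : ℝ × ℝ → E}
    (hf : IntegrableOn f (slantedStrip (θ₀ / τ₀) (2 * π / n - 2 * π) (2 * π))) :
    ∫ x in slantedStrip (θ₀ / τ₀) (2 * π / n - 2 * π) (2 * π), f x =
      ∑' p, ∫ x in Ucell θ₀ τ₀ n, f (x - helVec θ₀ τ₀ n p) := by
  rw [← iUnion_preimage_add_helVec_Ucell hτ₀ hn] at hf ⊢
  rw [integral_iUnion (fun p => (measurableSet_Ucell hτ₀ hn).preimage (measurable_add_const _))
    (pairwise_disjoint_preimage_add_helVec_Ucell hτ₀ hn) hf]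
  refine tsum_congr fun p => ?_
  simpa using (measurePreserving_add_right volume (helVec θ₀ τ₀ n p)).setIntegral_preimage_emb
    (measurableEmbedding_addRight _) (fun x => f (x - helVec θ₀ τ₀ n p)) (Ucell θ₀ τ₀ n)

lemma integrableOn_Ucell_sub_helVec (hτ₀ : τ₀ ≠ 0) (hn : n ≠ 0) {f : ℝ × ℝ → E}
    (hf : IntegrableOn f (slantedStrip (θ₀ / τ₀) (2 * π / n - 2 * π) (2 * π))) (p : Fin n × ℤ) :
    IntegrableOn (fun x => f (x - helVec θ₀ τ₀ n p)) (Ucell θ₀ τ₀ n) := by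
  rw [← (measurePreserving_add_right volume (helVec θ₀ τ₀ n p)).integrableOn_comp_preimage
    (measurableEmbedding_addRight _)]
  refine (hf.mono_set ?_).congr_fun (fun x _ => by simp)
    ((measurableSet_Ucell hτ₀ hn).preimage (measurable_add_const _))
  rw [← iUnion_preimage_add_helVec_Ucell hτ₀ hn]
  exact subset_iUnion (fun p => (· + helVec θ₀ τ₀ n p) ⁻¹' Ucell θ₀ τ₀ n) p

theorem setIntegral_Ico_prod_univ_eq_setIntegral_Ucell_tsum [NormedSpace ℝ E] (hτ₀ : τ₀ ≠ 0)
    (hn : n ≠ 0) {f : ℝ × ℝ → E} (hper : Periodic f (2 * π, 0))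
    (hf : IntegrableOn f (Ico 0 (2 * π) ×ˢ univ)) :
    ∫ x in Ico 0 (2 * π) ×ˢ univ, f x =
      ∫ x in Ucell θ₀ τ₀ n, ∑' p, f (x - helVec θ₀ τ₀ n p) := by
  have hinv : ∀ (g : AddSubgroup.zmultiples ((2 * π, 0) : ℝ × ℝ)) x, f (g +ᵥ x) = f x := by
    rintro ⟨_, k, rfl⟩ x
    simpa [add_comm] using (hper.zsmul k) x
  have hS := isAddFundamentalDomain_slantedStrip two_pi_pos 0 0
  have hW := isAddFundamentalDomain_slantedStrip two_pi_pos (θ₀ / τ₀) (2 * π / n - 2 * π)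
  rw [slantedStrip_zero, zero_add] at hS
  have hfW := (hS.integrableOn_iff hW hinv).1 hf
  rw [hS.setIntegral_eq hW hinv, setIntegral_slantedStrip_eq_tsum hτ₀ hn hfW, integral_tsum]
  · exact fun p => (integrableOn_Ucell_sub_helVec hτ₀ hn hfW p).aestronglyMeasurable
  · rw [← setLIntegral_slantedStrip_eq_tsum hτ₀ hn fun x => ‖f x‖ₑ]
    exact hfW.2.ne

end Unfolding

theorem fourier_coefficient_unit_cell_general
    (θ₀ τ₀ : ℝ) (hτ₀ : 0 < τ₀)
    (n : ℕ) (hn : 1 ≤ n)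
    (ψ : ℝ → ℝ → ℂ)
    (hcont : ContinuousOn (fun p : ℝ × ℝ => ψ p.1 p.2)
      (Set.Ico (0:ℝ) (2*Real.pi) ×ˢ (Set.univ : Set ℝ)))
    (hsum : (∑' p : helLat θ₀ τ₀ n,
        ∫⁻ φ in Set.Ico (0:ℝ) (2*Real.pi), ∫⁻ z : ℝ,
          (‖ψ (mod2pi (φ - (p : ℝ × ℝ).1)) (z - (p : ℝ × ℝ).2)‖₊ : ENNReal)) < ⊤)
    (ρ : ℝ → ℝ → ℂ)
    (hρ : ∀ φ z : ℝ, ρ φ z =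
      ∑' p : helLat θ₀ τ₀ n, ψ (mod2pi (φ - (p : ℝ × ℝ).1)) (z - (p : ℝ × ℝ).2)) :
    ∀ q ∈ helRec θ₀ τ₀ n,
      (∫ φ in (0:ℝ)..(2*Real.pi), ∫ z : ℝ,
          ψ φ z * Complex.exp (-Complex.I * (((q.1 : ℝ) * φ + q.2 * z : ℝ) : ℂ))) =
      ∫ p in Ucell θ₀ τ₀ n,
          ρ p.1 p.2 * Complex.exp (-Complex.I * (((q.1 : ℝ) * p.1 + q.2 * p.2 : ℝ) : ℂ)) := by
  intro q hq
  have hn₀ : n ≠ 0 := by omega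
  set F : ℝ × ℝ → ℂ := fun x => ψ (mod2pi x.1) x.2
  set G : ℝ × ℝ → ℂ := fun x => F x * planeWave q x
  have hF : Periodic F (2 * π, 0) := fun x => by simp [F, mod2pi_periodic x.1]
  have hGS : EqOn G (fun x => ψ x.1 x.2 * planeWave q x) (Ico 0 (2 * π) ×ˢ univ) :=
    fun x hx => by simp [G, F, mod2pi_eq_self hx.1]
  have hG : IntegrableOn G (Ico 0 (2 * π) ×ˢ univ) := by
    refine integrableOn_prod_of_lintegral_lt_top measurableSet_Ico .univ
      ((hcont.mul (continuous_planeWave q).continuousOn).congr hGS) (lt_of_le_of_lt ?_ hsum)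
    refine le_of_eq_of_le ?_
      (ENNReal.le_tsum ⟨(0, 0), 0, 0, le_rfl, by omega, by simp [mod2pi_zero]⟩)
    simp only [Measure.restrict_univ, enorm_mul, enorm_planeWave, mul_one, sub_zero, G, F]
    simp only [enorm_eq_nnnorm]
  calc _ = ∫ x in Ico 0 (2 * π) ×ˢ univ, G x :=
        intervalIntegral_integral_eq_setIntegral_Ico_prod_univ
          (f := fun x => ψ x.1 x.2 * planeWave q x) two_pi_pos.le hGS.symm hG
    _ = ∫ x in Ucell θ₀ τ₀ n, ∑' p, G (x - helVec θ₀ τ₀ n p) :=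
        setIntegral_Ico_prod_univ_eq_setIntegral_Ucell_tsum hτ₀.ne' hn₀
          (hF.mul (planeWave_periodic q)) hG
    _ = _ := by
        refine setIntegral_congr_fun (measurableSet_Ucell hτ₀.ne' hn₀) fun x _ => ?_
        simp only [G, planeWave_sub_helVec hq]
        rw [hρ, ← tsum_mul_right]
        exact (tsum_helLat_sub_eq_tsum_helVec hτ₀.ne' n (F := fun y => F y * planeWave q x)
          (fun y => congrArg (· * planeWave q x) (hF y)) x).symm

/-- On reciprocal lattice points, the Fourier coefficients of a helically
periodized function `ρ = Σ_{(θ,τ)∈H₀} ψ(·−θ mod 2π, ·−τ)` computed from any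
representative `ψ` agree with the Fourier integral of `ρ` over the unit cell. -/
theorem fourier_coefficient_unit_cell
    (θ₀ τ₀ : ℝ) (hθ₀ : θ₀ ∈ Set.Ico 0 (2*Real.pi)) (hτ₀ : 0 < τ₀)
    (n : ℕ) (hn : 1 ≤ n)
    (ψ : ℝ → ℝ → ℂ)
    (hcont : ContinuousOn (fun p : ℝ × ℝ => ψ p.1 p.2)
      (Set.Ico (0:ℝ) (2*Real.pi) ×ˢ (Set.univ : Set ℝ)))
    (hsum : (∑' p : helLat θ₀ τ₀ n,
        ∫⁻ φ in Set.Ico (0:ℝ) (2*Real.pi), ∫⁻ z : ℝ,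
          (‖ψ (mod2pi (φ - (p : ℝ × ℝ).1)) (z - (p : ℝ × ℝ).2)‖₊ : ENNReal)) < ⊤)
    (ρ : ℝ → ℝ → ℂ)
    (hρ : ∀ φ z : ℝ, ρ φ z =
      ∑' p : helLat θ₀ τ₀ n, ψ (mod2pi (φ - (p : ℝ × ℝ).1)) (z - (p : ℝ × ℝ).2)) :
    ∀ q ∈ helRec θ₀ τ₀ n,
      (∫ φ in (0:ℝ)..(2*Real.pi), ∫ z : ℝ,
          ψ φ z * Complex.exp (-Complex.I * (((q.1 : ℝ) * φ + q.2 * z : ℝ) : ℂ))) =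
      ∫ p in Ucell θ₀ τ₀ n,
          ρ p.1 p.2 * Complex.exp (-Complex.I * (((q.1 : ℝ) * p.1 + q.2 * p.2 : ℝ) : ℂ)) :=
  fourier_coefficient_unit_cell_general θ₀ τ₀ hτ₀ n hn ψ hcont hsum ρ hρ
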